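/- arXiv:2504.11656 — 3 statements merged into one kernel-verified Lean document; each statement's English description precedes it below -/
import Mathlib

section
/- Let Δ ≥ 3 and let T be a tree rooted at r with maximum degree at most Δ. Suppose there are m distinct leaves x_1, ..., x_m with d(r, x_i) = a for all i, for some a ≥ 1. Then there exists i ∈ [m] such that T contains leaf-to-leaf paths of at least log_{Δ−1}(m/Δ) + 2 distinct lengths between 0 and 2a, all having x_i as an endpoint. -/
/-!
Let `M i j` be the depth at which the root paths of the leaves `x i` and `x j` separate. Joining
the two root paths below that vertex gives a leaf-to-leaf path of length `2 (a - M i j)`, so `x i`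
witnesses at least as many lengths as `M i ·` takes values. To find a leaf for which `M i ·` takes
many values, split the leaves below a vertex according to its children and recurse into the
largest class: each step divides the number of leaves by at most the branching (`Δ` at the root,
`Δ - 1` below it) and contributes the current depth as a new value of `M i ·`. This gives a leaf
with `(Δ - 1)² m ≤ Δ (Δ - 1)^k`, where `k` is the number of values.
-/

open Finset

theorem Finset.exists_card_le_mul_card_fiber {ι β : Type*} [DecidableEq β] {S : Finset ι}
    (hS : S.Nonempty) (g : ι → β) :
    ∃ i ∈ S, #S ≤ #(S.image g) * #{j ∈ S | g j = g i} := by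
  obtain ⟨v, hv, hmax⟩ :=
    (S.image g).exists_max_image (fun v => #{j ∈ S | g j = v}) (hS.image g)
  obtain ⟨i, hi, rfl⟩ := mem_image.mp hv
  refine ⟨i, hi, ?_⟩
  calc #S = ∑ v ∈ S.image g, #{j ∈ S | g j = v} := card_eq_sum_card_image g S
    _ ≤ _ := by simpa using sum_le_card_nsmul _ _ _ hmax

namespace Branching

/- `A i d` models the vertex at depth `d` on the root path of the `i`-th leaf, all leaves lying at
depth `a`. -/
variable {ι β : Type*} [DecidableEq β] {A : ι → ℕ → β} {a : ℕ}

def PrefixClosed (A : ι → ℕ → β) (a : ℕ) : Prop :=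
  ∀ i j n, n ≤ a → A i n = A j n → ∀ d ≤ n, A i d = A j d

def meetDepth (A : ι → ℕ → β) (a : ℕ) (i j : ι) : ℕ :=
  Nat.findGreatest (fun d => A i d = A j d) a

theorem eq_iff_le_meetDepth (hA : PrefixClosed A a)
    (hroot : ∀ i j, A i 0 = A j 0) (i j : ι) {d : ℕ} (hd : d ≤ a) :
    A i d = A j d ↔ d ≤ meetDepth A a i j := by
  refine ⟨Nat.le_findGreatest (P := fun d => A i d = A j d) hd,
    fun h => hA i j _ (Nat.findGreatest_le a) ?_ d h⟩
  exact Nat.findGreatest_spec (P := fun d => A i d = A j d) (Nat.zero_le a) (hroot i j)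

theorem card_image_meetDepth_lt (hA : PrefixClosed A a)
    (hroot : ∀ i j, A i 0 = A j 0) {b : ℕ} (hb : b < a) {S C : Finset ι} (hCS : C ⊆ S)
    {i j : ι} (hC : ∀ k ∈ C, A k (b + 1) = A i (b + 1)) (hj : j ∈ S) (hij : A i b = A j b)
    (hij' : A i (b + 1) ≠ A j (b + 1)) :
    #(C.image (meetDepth A a i)) < #(S.image (meetDepth A a i)) := by
  have hmeet : meetDepth A a i j = b := by
    rw [eq_iff_le_meetDepth hA hroot i j hb.le] at hij
    rw [Ne, eq_iff_le_meetDepth hA hroot i j (d := b + 1) hb] at hij'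
    omega
  refine card_lt_card ((ssubset_iff_of_subset (image_subset_image hCS)).mpr
    ⟨b, mem_image.mpr ⟨j, hj, hmeet⟩, fun hb' => ?_⟩)
  obtain ⟨k, hk, hkb⟩ := mem_image.mp hb'
  have := (eq_iff_le_meetDepth hA hroot i k hb).mp (hC k hk).symm
  omega

theorem exists_sq_mul_card_le_mul_pow
    (hA : PrefixClosed A a) (hroot : ∀ i j, A i 0 = A j 0) {D t b : ℕ} (hD : 1 ≤ D)
    (hDt : D ≤ t) (hb : b < a) {S : Finset ι} (hS : S.Nonempty)
    (hSb : ∀ i ∈ S, ∀ j ∈ S, A i b = A j b)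
    (ht : #(S.image (A · (b + 1))) ≤ t)
    (ih : ∀ C ⊆ S, C.Nonempty → (∀ i ∈ C, ∀ j ∈ C, A i (b + 1) = A j (b + 1)) →
      ∃ i ∈ C, D * #C ≤ D ^ #(C.image (meetDepth A a i))) :
    ∃ i ∈ S, D ^ 2 * #S ≤ t * D ^ #(S.image (meetDepth A a i)) := by
  obtain ⟨i₀, hi₀, hfiber⟩ := exists_card_le_mul_card_fiber hS (A · (b + 1))
  set C := {j ∈ S | A j (b + 1) = A i₀ (b + 1)}
  have hCS : C ⊆ S := filter_subset _ _
  obtain ⟨i, hiC, hCi⟩ := ih C hCS ⟨i₀, mem_filter.mpr ⟨hi₀, rfl⟩⟩ (fun i hi j hj =>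
    (mem_filter.mp hi).2.trans (mem_filter.mp hj).2.symm)
  have hCi' : ∀ k ∈ C, A k (b + 1) = A i (b + 1) := fun k hk =>
    (mem_filter.mp hk).2.trans (mem_filter.mp hiC).2.symm
  refine ⟨i, hCS hiC, ?_⟩
  by_cases hC : C = S
  · rw [hC] at hCi
    calc D ^ 2 * #S = D * (D * #S) := by ring
      _ ≤ t * D ^ #(S.image (meetDepth A a i)) := Nat.mul_le_mul hDt hCi
  · obtain ⟨j, hjS, hjC⟩ := not_subset.mp (fun h => hC (hCS.antisymm h))
    have hk := card_image_meetDepth_lt hA hroot hb hCS hCi' hjS (hSb i (hCS hiC) j hjS)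
      (fun h => hjC (mem_filter.mpr ⟨hjS, h.symm.trans (mem_filter.mp hiC).2⟩))
    calc D ^ 2 * #S ≤ D ^ 2 * (t * #C) := by gcongr; exact hfiber.trans (by gcongr)
      _ = t * D * (D * #C) := by ring
      _ ≤ t * D * D ^ #(C.image (meetDepth A a i)) := by gcongr
      _ = t * D ^ (#(C.image (meetDepth A a i)) + 1) := by ring
      _ ≤ t * D ^ #(S.image (meetDepth A a i)) := by gcongr; exact hk

theorem exists_mul_card_le_pow
    (hA : PrefixClosed A a) (hroot : ∀ i j, A i 0 = A j 0)
    (hinj : ∀ i j, A i a = A j a → i = j) {D b : ℕ} (hD : 1 ≤ D) (hb : b ≤ a)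
    (hbranch : ∀ (S : Finset ι) (d : ℕ), b ≤ d → d < a →
      (∀ i ∈ S, ∀ j ∈ S, A i d = A j d) → #(S.image (A · (d + 1))) ≤ D)
    {S : Finset ι} (hS : S.Nonempty) (hSb : ∀ i ∈ S, ∀ j ∈ S, A i b = A j b) :
    ∃ i ∈ S, D * #S ≤ D ^ #(S.image (meetDepth A a i)) := by
  induction h : a - b generalizing b S with
  | zero =>
    obtain ⟨i, hi⟩ := hS
    have hSi : S = {i} := eq_singleton_iff_unique_mem.mpr
      ⟨hi, fun j hj => hinj j i (by rw [show b = a by omega] at hSb; exact hSb j hj i hi)⟩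
    subst hSi
    simp
  | succ n ih =>
    obtain ⟨i, hi, h⟩ := exists_sq_mul_card_le_mul_pow hA hroot hD le_rfl (by omega) hS hSb
      (hbranch S b le_rfl (by omega) hSb) fun C _ hC hCb =>
        ih (by omega) (fun T d hd => hbranch T d (by omega)) hC hCb (by omega)
    exact ⟨i, hi, Nat.le_of_mul_le_mul_left (by linarith) (by omega : 0 < D)⟩

theorem exists_sq_mul_card_le_succ_mul_pow
    (hA : PrefixClosed A a) (hroot : ∀ i j, A i 0 = A j 0)
    (hinj : ∀ i j, A i a = A j a → i = j) {D : ℕ} (hD : 1 ≤ D) (ha : 1 ≤ a)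
    (hbranch : ∀ (S : Finset ι) (d : ℕ), 1 ≤ d → d < a →
      (∀ i ∈ S, ∀ j ∈ S, A i d = A j d) → #(S.image (A · (d + 1))) ≤ D)
    (hbranch_root : ∀ S : Finset ι, #(S.image (A · 1)) ≤ D + 1) {S : Finset ι}
    (hS : S.Nonempty) :
    ∃ i ∈ S, D ^ 2 * #S ≤ (D + 1) * D ^ #(S.image (meetDepth A a i)) :=
  exists_sq_mul_card_le_mul_pow hA hroot hD (Nat.le_succ D) ha hS
    (fun i _ j _ => hroot i j) (hbranch_root S) fun _ _ hC hC1 =>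
      exists_mul_card_le_pow hA hroot hinj hD ha hbranch hC hC1

end Branching

theorem Real.logb_div_add_two_le_of_sq_mul_le {Δ m k : ℕ} (hΔ : 3 ≤ Δ) (hm : 1 ≤ m)
    (h : (Δ - 1) ^ 2 * m ≤ Δ * (Δ - 1) ^ k) :
    Real.logb ((Δ : ℝ) - 1) (m / Δ) + 2 ≤ k := by
  have hB : (1 : ℝ) < Δ - 1 := by
    have : (3 : ℝ) ≤ Δ := by exact_mod_cast hΔ
    linarith
  have hm' : (0 : ℝ) < m := by exact_mod_cast hm
  have h' : ((Δ : ℝ) - 1) ^ 2 * m ≤ Δ * ((Δ : ℝ) - 1) ^ k := by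
    have := Nat.cast_le (α := ℝ) |>.mpr h
    push_cast [Nat.cast_sub (by omega : 1 ≤ Δ)] at this
    exact this
  have hlogb : Real.logb ((Δ : ℝ) - 1) (m / Δ) ≤ k - 2 := by
    rw [Real.logb_le_iff_le_rpow hB (by positivity), Real.rpow_sub (by linarith),
      Real.rpow_natCast, Real.rpow_two, div_le_div_iff₀ (by positivity) (by positivity)]
    linarith
  linarith

namespace SimpleGraph

variable {V : Type*} {G : SimpleGraph V}

theorem Walk.IsPath.append {u v w : V} {p : G.Walk u v} {q : G.Walk v w} (hp : p.IsPath)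
    (hq : q.IsPath) (h : ∀ x ∈ p.support, x ∈ q.support → x = v) : (p.append q).IsPath := by
  have hq' := hq.support_nodup
  rw [← q.cons_tail_support, List.nodup_cons] at hq'
  rw [Walk.isPath_def, Walk.support_append, List.nodup_append]
  refine ⟨hp.support_nodup, hq'.2, fun x hx y hy hxy => ?_⟩
  subst hxy
  exact hq'.1 (h x hx (List.mem_of_mem_tail hy) ▸ hy)

theorem IsAcyclic.eq_and_getVert_eq_of_getVert_eq (hG : G.IsAcyclic) {u v w : V}
    {p : G.Walk u v} {q : G.Walk u w} (hp : p.IsPath) (hq : q.IsPath) {s t : ℕ}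
    (hs : s ≤ p.length) (ht : t ≤ q.length) (h : p.getVert s = q.getVert t) :
    s = t ∧ ∀ d ≤ s, p.getVert d = q.getVert d := by
  have huniq : p.take s = (q.take t).copy rfl h.symm := congrArg Subtype.val
    ((hG.subsingleton_path _ _).elim ⟨p.take s, hp.take s⟩
      ⟨(q.take t).copy rfl h.symm, by simpa using hq.take t⟩)
  have hst : s = t := by
    simpa [hs, ht] using congrArg Walk.length huniq
  refine ⟨hst, fun d hd => ?_⟩
  have := congrArg (Walk.getVert · d) huniq
  simp only [Walk.take_getVert, Walk.getVert_copy] at this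
  rwa [min_eq_right hd, ← hst, min_eq_right hd] at this

theorem IsAcyclic.exists_isPath_length_eq_of_getVert_eq (hG : G.IsAcyclic) {u x y : V}
    {p : G.Walk u x} {q : G.Walk u y} (hp : p.IsPath) (hq : q.IsPath) {n : ℕ}
    (hnp : n ≤ p.length) (hnq : n ≤ q.length) (hn : p.getVert n = q.getVert n)
    (hmax : ∀ s ≤ p.length, s ≤ q.length → p.getVert s = q.getVert s → s ≤ n) :
    ∃ w : G.Walk x y, w.IsPath ∧ w.length = p.length - n + (q.length - n) := by
  refine ⟨(p.drop n).reverse.append ((q.drop n).copy hn.symm rfl), ?_, by simp⟩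
  refine (hp.drop n).reverse.append (by simpa using hq.drop n) fun z hzp hzq => ?_
  rw [Walk.support_reverse, List.mem_reverse, Walk.mem_support_iff_exists_getVert] at hzp
  rw [Walk.support_copy, Walk.mem_support_iff_exists_getVert] at hzq
  obtain ⟨s, rfl, hs⟩ := hzp
  obtain ⟨t, hst, ht⟩ := hzq
  simp only [Walk.drop_getVert, Walk.drop_length] at hst hs ht ⊢
  obtain ⟨hst', hpre⟩ :=
    hG.eq_and_getVert_eq_of_getVert_eq hp hq (by omega) (by omega) hst.symm
  have := hmax (n + s) (by omega) (by omega) (hpre _ le_rfl)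
  rw [show s = 0 by omega, add_zero]

variable {ι : Type*} {r : V} {x : ι → V} {a : ℕ} {p : ∀ i, G.Walk r (x i)}

theorem IsAcyclic.getVert_eq_of_getVert_eq_of_le (hG : G.IsAcyclic) (hp : ∀ i, (p i).IsPath)
    (hlen : ∀ i, (p i).length = a) {i j : ι} {n : ℕ} (hn : n ≤ a)
    (h : (p i).getVert n = (p j).getVert n) {d : ℕ} (hd : d ≤ n) :
    (p i).getVert d = (p j).getVert d :=
  (hG.eq_and_getVert_eq_of_getVert_eq (hp i) (hp j) (by rw [hlen]; exact hn)
    (by rw [hlen]; exact hn) h).2 d hd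

theorem IsAcyclic.card_image_getVert_succ_lt_degree [DecidableEq V] [G.LocallyFinite]
    (hG : G.IsAcyclic) (hp : ∀ i, (p i).IsPath) (hlen : ∀ i, (p i).length = a) {d : ℕ}
    (hd : 1 ≤ d) (hda : d < a) {S : Finset ι} {i₀ : ι}
    (hS : ∀ i ∈ S, (p i).getVert d = (p i₀).getVert d) :
    #(S.image fun i => (p i).getVert (d + 1)) < G.degree ((p i₀).getVert d) := by
  rw [← card_neighborFinset_eq_degree]
  have hsub :
      (S.image fun i => (p i).getVert (d + 1)) ⊆ G.neighborFinset ((p i₀).getVert d) := by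
    intro z hz
    obtain ⟨i, hi, rfl⟩ := mem_image.mp hz
    rw [mem_neighborFinset, ← hS i hi]
    exact (p i).adj_getVert_succ (by rw [hlen]; omega)
  refine card_lt_card ((ssubset_iff_of_subset hsub).mpr ⟨(p i₀).getVert (d - 1), ?_, ?_⟩)
  · rw [mem_neighborFinset]
    simpa [Nat.sub_add_cancel hd] using
      ((p i₀).adj_getVert_succ (i := d - 1) (by rw [hlen]; omega)).symm
  · intro hz
    obtain ⟨i, hi, h⟩ := mem_image.mp hz
    have := (hG.eq_and_getVert_eq_of_getVert_eq (hp i) (hp i₀) (by rw [hlen]; omega)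
      (by rw [hlen]; omega) h).1
    omega

theorem card_image_getVert_one_le_degree [DecidableEq V] [G.LocallyFinite]
    (hlen : ∀ i, 0 < (p i).length) (S : Finset ι) :
    #(S.image fun i => (p i).getVert 1) ≤ G.degree r := by
  rw [← card_neighborFinset_eq_degree]
  refine card_le_card fun z hz => ?_
  obtain ⟨i, -, rfl⟩ := mem_image.mp hz
  simpa using (p i).adj_getVert_succ (hlen i)

theorem IsAcyclic.exists_isPath_length_eq_two_mul_sub_meetDepth [DecidableEq V]
    (hG : G.IsAcyclic) (hp : ∀ i, (p i).IsPath) (hlen : ∀ i, (p i).length = a) (i j : ι) :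
    ∃ w : G.Walk (x i) (x j), w.IsPath ∧
      w.length = 2 * (a - Branching.meetDepth (fun i d => (p i).getVert d) a i j) := by
  set M := Branching.meetDepth (fun i d => (p i).getVert d) a i j
  have hMa : M ≤ a := Nat.findGreatest_le a
  have hM : (p i).getVert M = (p j).getVert M :=
    Nat.findGreatest_spec (P := fun d => (p i).getVert d = (p j).getVert d) (Nat.zero_le a)
      (by simp)
  obtain ⟨w, hw, hwlen⟩ := hG.exists_isPath_length_eq_of_getVert_eq (hp i) (hp j)
    (by rw [hlen]; exact hMa) (by rw [hlen]; exact hMa) hM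
    fun s hs _ h => Nat.le_findGreatest (P := fun d => (p i).getVert d = (p j).getVert d)
      (by rwa [hlen] at hs) h
  exact ⟨w, hw, by rw [hwlen, hlen, hlen]; omega⟩

theorem IsAcyclic.card_image_meetDepth_le_ncard [Fintype ι] [DecidableEq V] [G.LocallyFinite]
    (hG : G.IsAcyclic) (hp : ∀ i, (p i).IsPath) (hlen : ∀ i, (p i).length = a)
    (hleaf : ∀ i, G.degree (x i) = 1) (i : ι) :
    #(univ.image (Branching.meetDepth (fun i d => (p i).getVert d) a i)) ≤
      {L : ℕ | L ≤ 2 * a ∧ ∃ (v : V) (w : G.Walk (x i) v),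
        w.IsPath ∧ G.degree v = 1 ∧ w.length = L}.ncard := by
  set K := univ.image (Branching.meetDepth (fun i d => (p i).getVert d) a i)
  have hKa : ∀ M ∈ K, M ≤ a := fun M hM => by
    obtain ⟨j, -, rfl⟩ := mem_image.mp hM
    exact Nat.findGreatest_le a
  calc #K = #(K.image fun M => 2 * (a - M)) :=
        (card_image_of_injOn fun M hM M' hM' h => by
          have := hKa M hM; have := hKa M' hM'; omega).symm
    _ = (↑(K.image fun M => 2 * (a - M)) : Set ℕ).ncard := (Set.ncard_coe_finset _).symm
    _ ≤ _ := by
      refine Set.ncard_le_ncard (fun L hL => ?_)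
        ((Set.finite_Iic (2 * a)).subset fun L hL => hL.1)
      obtain ⟨M, hM, rfl⟩ := mem_image.mp hL
      obtain ⟨j, -, rfl⟩ := mem_image.mp hM
      obtain ⟨w, hw, hwlen⟩ := hG.exists_isPath_length_eq_two_mul_sub_meetDepth hp hlen i j
      exact ⟨by omega, x j, w, hw, hleaf j, hwlen⟩

end SimpleGraph

theorem stmt7_general {V : Type*} [Fintype V] (G : SimpleGraph V)
    [DecidableRel G.Adj] (hG : G.IsTree) (r : V) (Δ m a : ℕ)
    (hΔ : 3 ≤ Δ) (hmax : G.maxDegree ≤ Δ) (hm : 1 ≤ m) (ha : 1 ≤ a)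
    (x : Fin m → V) (hinj : Function.Injective x)
    (hleaf : ∀ i, G.degree (x i) = 1) (hdist : ∀ i, G.dist r (x i) = a) :
    ∃ i : Fin m,
      Real.logb ((Δ : ℝ) - 1) ((m : ℝ) / (Δ : ℝ)) + 2 ≤
        (({ L : ℕ | L ≤ 2 * a ∧ ∃ (v : V) (p : G.Walk (x i) v),
            p.IsPath ∧ G.degree v = 1 ∧ p.length = L }).ncard : ℝ) := by
  classical
  choose p hp hdist' using fun i => hG.connected.exists_path_of_dist r (x i)
  have hlen : ∀ i, (p i).length = a := fun i => (hdist' i).trans (hdist i)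
  have hA : Branching.PrefixClosed (fun i d => (p i).getVert d) a :=
    fun _ _ _ hn h _ hd => hG.isAcyclic.getVert_eq_of_getVert_eq_of_le hp hlen hn h hd
  have hleaves : ∀ i j, (p i).getVert a = (p j).getVert a → i = j := fun i j h =>
    hinj (by simpa [SimpleGraph.Walk.getVert_of_length_le, hlen] using h)
  have hbranch : ∀ (S : Finset (Fin m)) (d : ℕ), 1 ≤ d → d < a →
      (∀ i ∈ S, ∀ j ∈ S, (p i).getVert d = (p j).getVert d) →
      #(S.image fun i => (p i).getVert (d + 1)) ≤ Δ - 1 := by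
    intro S d hd hda hS
    rcases S.eq_empty_or_nonempty with rfl | ⟨i₀, hi₀⟩
    · simp
    · have := hG.isAcyclic.card_image_getVert_succ_lt_degree hp hlen hd hda
        fun i hi => hS i hi i₀ hi₀
      have := G.degree_le_maxDegree ((p i₀).getVert d)
      omega
  have hbranch_root : ∀ S : Finset (Fin m), #(S.image fun i => (p i).getVert 1) ≤ Δ - 1 + 1 :=
    fun S => (SimpleGraph.card_image_getVert_one_le_degree (fun i => hlen i ▸ ha) S).trans
      ((G.degree_le_maxDegree r).trans (by omega))
  have : Nonempty (Fin m) := ⟨⟨0, hm⟩⟩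
  obtain ⟨i, -, hi⟩ := Branching.exists_sq_mul_card_le_succ_mul_pow hA (by simp) hleaves
    (by omega) ha hbranch hbranch_root univ_nonempty
  rw [card_univ, Fintype.card_fin, Nat.sub_add_cancel (by omega : 1 ≤ Δ)] at hi
  exact ⟨i, (Real.logb_div_add_two_le_of_sq_mul_le hΔ hm hi).trans
    (by exact_mod_cast hG.isAcyclic.card_image_meetDepth_le_ncard hp hlen hleaf i)⟩

/-- If a tree rooted at `r` has maximum degree at most `Δ` (with `Δ ≥ 3`) and
`m` distinct leaves at distance `a ≥ 1` from `r`, then some leaf `x i` witnesses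
at least `log_{Δ−1}(m/Δ) + 2` distinct leaf-to-leaf path lengths in `[0, 2a]`. -/
theorem stmt7 {V : Type*} [Fintype V] [DecidableEq V] (G : SimpleGraph V)
    [DecidableRel G.Adj] (hG : G.IsTree) (r : V) (Δ m a : ℕ)
    (hΔ : 3 ≤ Δ) (hmax : G.maxDegree ≤ Δ) (hm : 1 ≤ m) (ha : 1 ≤ a)
    (x : Fin m → V) (hinj : Function.Injective x)
    (hleaf : ∀ i, G.degree (x i) = 1) (hdist : ∀ i, G.dist r (x i) = a) :
    ∃ i : Fin m,
      Real.logb ((Δ : ℝ) - 1) ((m : ℝ) / (Δ : ℝ)) + 2 ≤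
        (({ L : ℕ | L ≤ 2 * a ∧ ∃ (v : V) (p : G.Walk (x i) v),
            p.IsPath ∧ G.degree v = 1 ∧ p.length = L }).ncard : ℝ) :=
  stmt7_general G hG r Δ m a hΔ hmax hm ha x hinj hleaf hdist
end

section
/- Let k ≥ 3 and let G be an n-vertex degree k-critical graph with n ≥ k+1. Then there exists an ordering x_1, x_2, ..., x_n of V(G) such that, writing d⁺(x_i) for the number of neighbours x_j of x_i with j > i, one has d⁺(x_1) = k, d⁺(x_i) = k−1 for 2 ≤ i ≤ n−k+1, and d⁺(x_i) = n−i for n−k+2 ≤ i ≤ n. -/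
/-!
Peel the vertices off one at a time: first a vertex of degree at most `k` (criticality applied
to the graph minus one vertex), then repeatedly a vertex with fewer than `k` neighbours among
those still present, which criticality provides for every proper nonempty vertex set. In this
ordering `d⁺(x_1) ≤ k` and `d⁺(x_i) ≤ min (k - 1) (n - i)` for `i ≥ 2`, while the forward
degrees of any ordering sum to the number of edges. The upper bounds sum to
`(k - 1) n + 1 - C(k, 2)`, which is exactly the number of edges, so every bound is attained.
-/

open Finset Fintype

section ForwardDegree

variable {V ι : Type*} [Fintype ι] [LinearOrder ι]
  (G : SimpleGraph V) [DecidableRel G.Adj]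

def forwardDegree (f : ι ≃ V) (i : ι) : ℕ := #{j | i < j ∧ G.Adj (f i) (f j)}

lemma forwardDegree_eq_card_filter [Fintype V] (f : ι ≃ V) (i : ι) :
    forwardDegree G f i = #{u | i < f.symm u ∧ G.Adj (f i) u} :=
  card_equiv f fun j => by simp

lemma sum_forwardDegree_eq_card_edgeFinset [Fintype V] (f : ι ≃ V) :
    ∑ i, forwardDegree G f i = #G.edgeFinset := by
  have hpairs : ∑ i, forwardDegree G f i = #{p : ι × ι | p.1 < p.2 ∧ G.Adj (f p.1) (f p.2)} := by
    simp only [forwardDegree, card_filter, Fintype.sum_prod_type]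
  rw [hpairs]
  refine card_bij (fun p _ => s(f p.1, f p.2)) ?_ ?_ ?_
  · intro p hp
    simpa using (mem_filter.1 hp).2.2
  · rintro ⟨a, b⟩ hab ⟨a', b'⟩ hab' he
    simp only [mem_filter, mem_univ, true_and] at hab hab'
    rcases Sym2.eq_iff.1 he with ⟨h1, h2⟩ | ⟨h1, h2⟩
    · simp_all
    · simp only [EmbeddingLike.apply_eq_iff_eq] at h1 h2
      subst h1 h2
      exact absurd (hab.1.trans hab'.1) (lt_irrefl _)
  · intro e he
    induction e using Sym2.ind with
    | _ u v =>
    have huv : G.Adj u v := by simpa using he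
    rcases lt_trichotomy (f.symm u) (f.symm v) with h | h | h
    · exact ⟨(f.symm u, f.symm v), by simpa [h] using huv, by simp⟩
    · exact absurd (f.symm.injective h) huv.ne
    · exact ⟨(f.symm v, f.symm u), by simpa [h] using huv.symm, by simp [Sym2.eq_swap]⟩

end ForwardDegree

section Peel

variable {V : Type*} [Fintype V] [DecidableEq V] (c : Finset V → V)

def peel (m : ℕ) : Finset V := (fun S => S.erase (c S))^[m] univ

@[simp] lemma peel_zero : peel c 0 = univ := rfl

lemma peel_succ (m : ℕ) : peel c (m + 1) = (peel c m).erase (c (peel c m)) :=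
  Function.iterate_succ_apply' _ _ _

lemma peel_antitone : Antitone (peel c) :=
  antitone_nat_of_succ_le fun m => (peel_succ c m).trans_le (erase_subset _ _)

variable {c} (hc : ∀ S : Finset V, S.Nonempty → c S ∈ S)
include hc

lemma card_peel {m : ℕ} (hm : m ≤ card V) : #(peel c m) = card V - m := by
  induction m with
  | zero => simp
  | succ m ih =>
    have hmem : c (peel c m) ∈ peel c m :=
      hc _ (card_pos.1 (by rw [ih (by omega)]; omega))
    rw [peel_succ, card_erase_of_mem hmem, ih (by omega)]
    omega

lemma choice_peel_mem {m : ℕ} (hm : m < card V) : c (peel c m) ∈ peel c m :=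
  hc _ (card_pos.1 (by rw [card_peel hc hm.le]; omega))

lemma choice_peel_mem_peel_succ_iff {i j : ℕ} (hj : j < card V) :
    c (peel c j) ∈ peel c (i + 1) ↔ i < j := by
  refine ⟨fun h => ?_, fun h => peel_antitone c h (choice_peel_mem hc hj)⟩
  by_contra! hji
  have := peel_antitone c (Nat.succ_le_succ hji) h
  simp [peel_succ] at this

lemma injective_choice_peel : Function.Injective fun i : Fin (card V) => c (peel c i) := by
  refine .of_lt_imp_ne fun i j hij he => ?_
  have hj := (choice_peel_mem_peel_succ_iff hc j.isLt (i := i)).2 hij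
  exact absurd ((choice_peel_mem_peel_succ_iff hc i.isLt).1 (by simpa [he] using hj)) (lt_irrefl _)

noncomputable def peelOrder : Fin (card V) ≃ V :=
  .ofBijective _ ((bijective_iff_injective_and_card _).2 ⟨injective_choice_peel hc, by simp⟩)

lemma forwardDegree_peelOrder (G : SimpleGraph V) [DecidableRel G.Adj] (i : Fin (card V)) :
    forwardDegree G (peelOrder hc) i = #{u ∈ peel c (i + 1) | G.Adj (c (peel c i)) u} := by
  rw [forwardDegree_eq_card_filter]
  congr 1
  ext u
  obtain ⟨j, rfl⟩ := (peelOrder hc).surjective u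
  simp [peelOrder, choice_peel_mem_peel_succ_iff hc j.isLt]

end Peel

def criticalProfile (n k i : ℕ) : ℕ :=
  if i = 0 then k else if i ≤ n - k then k - 1 else n - 1 - i

lemma sum_range_criticalProfile_succ {n k : ℕ} (hkn : k + 1 ≤ n) :
    ∑ i ∈ range (n + 1), criticalProfile (n + 1) k i =
      ∑ i ∈ range n, criticalProfile n k i + (k - 1) := by
  obtain ⟨m, rfl⟩ : ∃ m, n = m + 1 := ⟨n - 1, by omega⟩
  have hshift (i : ℕ) : criticalProfile (m + 2) k (i + 2) = criticalProfile (m + 1) k (i + 1) := by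
    simp only [criticalProfile, Nat.add_eq_zero_iff, OfNat.ofNat_ne_zero, one_ne_zero, and_false,
      if_false]
    split_ifs <;> omega
  have hsecond : criticalProfile (m + 2) k 1 = k - 1 := by
    rw [criticalProfile, if_neg one_ne_zero, if_pos (by omega)]
  have hfirst (n : ℕ) : criticalProfile n k 0 = k := if_pos rfl
  simp only [sum_range_succ' _ (m + 1), sum_range_succ' _ m, hshift, hsecond, hfirst]
  omega

lemma sum_range_criticalProfile_self (k : ℕ) :
    ∑ i ∈ range (k + 1), criticalProfile (k + 1) k i = k + k.choose 2 := by
  have hreflect : ∀ i ∈ range (k + 1), criticalProfile (k + 1) k i = k + 1 - 1 - i := by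
    intro i hi
    rw [mem_range] at hi
    unfold criticalProfile
    split_ifs <;> omega
  have hgauss := sum_range_reflect (fun i => i) (k + 1)
  rw [sum_congr rfl hreflect, hgauss, sum_range_id, ← Nat.choose_two_right,
    Nat.choose_succ_succ', Nat.choose_one_right]

lemma sum_range_criticalProfile_add_choose_le {n k : ℕ} (hkn : k + 1 ≤ n) :
    ∑ i ∈ range n, criticalProfile n k i + k.choose 2 ≤ (k - 1) * n + 1 := by
  induction n, hkn using Nat.le_induction with
  | base =>
    have htwice : k.choose 2 * 2 = k * (k - 1) := by
      rw [Nat.choose_two_right, Nat.div_two_mul_two_of_even (Nat.even_mul_pred_self k)]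
    rw [sum_range_criticalProfile_self]
    rcases k with _ | k
    · simp
    · simp only [Nat.add_sub_cancel] at htwice ⊢
      nlinarith
  | succ n hkn ih =>
    rw [sum_range_criticalProfile_succ hkn, Nat.mul_succ]
    omega

section Critical

variable {V : Type*} [Fintype V] [DecidableEq V] (G : SimpleGraph V) [DecidableRel G.Adj] {k : ℕ}

lemma exists_peeling_choice (hV : 2 ≤ card V)
    (hcrit : ∀ S : Finset V, S.Nonempty → S ≠ univ → ∃ v ∈ S, #{u ∈ S | G.Adj v u} < k) :
    ∃ c : Finset V → V, (∀ S : Finset V, S.Nonempty → c S ∈ S) ∧ #{u | G.Adj (c univ) u} ≤ k ∧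
      ∀ S : Finset V, S.Nonempty → S ≠ univ → #{u ∈ S | G.Adj (c S) u} < k := by
  obtain ⟨w⟩ : Nonempty V := card_pos_iff.1 (by omega)
  obtain ⟨v₀, -, hv₀⟩ := hcrit (univ.erase w)
    (card_pos.1 (by rw [card_erase_of_mem (mem_univ w), card_univ]; omega))
    (fun h => by simpa using h.ge (mem_univ w))
  have hdeg : #{u | G.Adj v₀ u} ≤ k := by
    have hsub : ({u | G.Adj v₀ u} : Finset V) ⊆ insert w {u ∈ univ.erase w | G.Adj v₀ u} :=
      fun u hu => by by_cases u = w <;> simp_all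
    have := card_le_card hsub
    have := card_insert_le w {u ∈ univ.erase w | G.Adj v₀ u}
    omega
  have hchoice (S : Finset V) : ∃ v, (S.Nonempty → v ∈ S) ∧ (S = univ → #{u | G.Adj v u} ≤ k) ∧
      (S.Nonempty → S ≠ univ → #{u ∈ S | G.Adj v u} < k) := by
    by_cases hS : S.Nonempty ∧ S ≠ univ
    · obtain ⟨v, hvS, hv⟩ := hcrit S hS.1 hS.2
      exact ⟨v, fun _ => hvS, fun h => absurd h hS.2, fun _ _ => hv⟩
    · refine ⟨v₀, fun h => ?_, fun _ => hdeg, fun h h' => absurd ⟨h, h'⟩ hS⟩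
      simp [show S = univ by tauto]
  choose c hmem huniv hrest using hchoice
  exact ⟨c, hmem, huniv univ rfl, hrest⟩

lemma forwardDegree_peelOrder_le_criticalProfile {c : Finset V → V}
    (hc : ∀ S : Finset V, S.Nonempty → c S ∈ S) (hfirst : #{u | G.Adj (c univ) u} ≤ k)
    (hrest : ∀ S : Finset V, S.Nonempty → S ≠ univ → #{u ∈ S | G.Adj (c S) u} < k)
    (i : Fin (card V)) : forwardDegree G (peelOrder hc) i ≤ criticalProfile (card V) k i := by
  rw [forwardDegree_peelOrder]
  have hsub : {u ∈ peel c (i + 1) | G.Adj (c (peel c i)) u} ⊆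
      {u ∈ peel c i | G.Adj (c (peel c i)) u} :=
    filter_subset_filter _ (peel_antitone c (Nat.le_succ _))
  by_cases hi : (i : ℕ) = 0
  · rw [criticalProfile, if_pos hi]
    rw [hi, peel_zero] at hsub ⊢
    exact (card_le_card hsub).trans hfirst
  · have hcard : #(peel c i) = card V - i := card_peel hc i.isLt.le
    have hproper : peel c i ≠ univ := fun h => by
      rw [h, card_univ] at hcard
      omega
    have hlt := hrest _ ⟨_, choice_peel_mem hc i.isLt⟩ hproper
    have hle : #{u ∈ peel c (i + 1) | G.Adj (c (peel c i)) u} ≤ card V - (i + 1) :=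
      (card_filter_le _ _).trans_eq (card_peel hc i.isLt)
    have := card_le_card hsub
    unfold criticalProfile
    split_ifs <;> omega

end Critical

/-- Every degree `k`-critical graph on `n ≥ k+1` vertices (`k ≥ 3`) admits an
ordering `x_1, …, x_n` of its vertices with `d⁺(x_1) = k`, `d⁺(x_i) = k−1` for
`2 ≤ i ≤ n−k+1`, and `d⁺(x_i) = n−i` for `n−k+2 ≤ i ≤ n` (here stated with
0-based indices `i : Fin n`). -/
theorem stmt12 {V : Type*} [Fintype V] [DecidableEq V] (G : SimpleGraph V)
    [DecidableRel G.Adj] (k : ℕ) (hk : 3 ≤ k) (hn : k + 1 ≤ Fintype.card V)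
    (hedges : G.edgeFinset.card + k.choose 2 = (k - 1) * Fintype.card V + 1)
    (hcrit : ∀ S : Finset V, S.Nonempty → S ≠ Finset.univ →
      ∃ v ∈ S, (S.filter fun u => G.Adj v u).card < k) :
    ∃ f : Fin (Fintype.card V) ≃ V,
      ∀ i : Fin (Fintype.card V),
        (Finset.univ.filter fun j => i < j ∧ G.Adj (f i) (f j)).card =
          if (i : ℕ) = 0 then k
          else if (i : ℕ) ≤ Fintype.card V - k then k - 1
          else Fintype.card V - 1 - (i : ℕ) := by
  obtain ⟨c, hc, hfirst, hrest⟩ := exists_peeling_choice G (by omega) hcrit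
  have hle := forwardDegree_peelOrder_le_criticalProfile G hc hfirst hrest
  have hsum : ∑ i : Fin (card V), criticalProfile (card V) k i ≤
      ∑ i, forwardDegree G (peelOrder hc) i := by
    have := sum_range_criticalProfile_add_choose_le hn
    rw [sum_forwardDegree_eq_card_edgeFinset,
      Fin.sum_univ_eq_sum_range (fun i => criticalProfile (card V) k i)]
    omega
  have hsum_eq := le_antisymm (sum_le_sum fun i _ => hle i) hsum
  exact ⟨peelOrder hc, fun i => (sum_eq_sum_iff_of_le fun i _ => hle i).1 hsum_eq i (mem_univ i)⟩
end

section
/- For every k ≥ 1, there exist finite sets U, V of integers with U − V = {1, 2, ..., 13^k} and |U + V| = 10^k. -/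
/-!
Write `m·B` for the dilate `{m * b : b ∈ B}`. If `A` lies in an interval of length `m`, the sums
`a + m * b` are distinct (base-`m` digits do not interact), so `|A + m·B| = |A| |B|`; for
`A = [0, m)` and `B = [0, n)` this is the decomposition `[0, m) + m·[0, n) = [0, mn)`.
Starting from digit sets `X = {1, 2, 5, 7}`, `Y = {-5, -4, -1, 1}` with `X - Y = [0, 13)`,
`|X + Y| = 10` and `X + Y ⊆ [-4, 9)`, the sets `U' = X + 13·U`, `V' = Y + 13·V` satisfy
`U' - V' = (X - Y) + 13·(U - V)` and `U' + V' = (X + Y) + 13·(U + V)`, so both properties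
propagate by induction on `k`; a final shift by `1` turns `[0, 13^k)` into `{1, …, 13^k}`.
-/

open Pointwise Finset

namespace Int

variable {A B : Finset ℤ} {m : ℤ}

lemma image_mul_left_add (s t : Finset ℤ) :
    (s + t).image (m * ·) = s.image (m * ·) + t.image (m * ·) :=
  image_image₂_distrib fun a b => mul_add m a b

lemma image_mul_left_sub (s t : Finset ℤ) :
    (s - t).image (m * ·) = s.image (m * ·) - t.image (m * ·) :=
  image_image₂_distrib fun a b => mul_sub m a b

lemma add_image_mul_subset_Ico {a b n : ℤ} (hm : 0 ≤ m) (hA : A ⊆ Ico a (a + m))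
    (hB : B ⊆ Ico b (b + n)) :
    A + B.image (m * ·) ⊆ Ico (a + m * b) (a + m * b + m * n) := by
  intro x hx
  obtain ⟨u, hu, _, hmv, rfl⟩ := mem_add.mp hx
  obtain ⟨v, hv, rfl⟩ := mem_image.mp hmv
  obtain ⟨hu₁, hu₂⟩ := mem_Ico.mp (hA hu)
  obtain ⟨hv₁, hv₂⟩ := mem_Ico.mp (hB hv)
  rw [mem_Ico]
  constructor <;> nlinarith

lemma card_add_image_mul {a : ℤ} (hm : 0 < m) (hA : A ⊆ Ico a (a + m)) :
    #(A + B.image (m * ·)) = #A * #B := by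
  rw [card_add_iff.mpr, card_image_of_injective _ (mul_right_injective₀ hm.ne')]
  rintro ⟨u, _⟩ ⟨hu, hv⟩ ⟨u', _⟩ ⟨hu', hv'⟩ (h : u + _ = u' + _)
  obtain ⟨v, -, rfl⟩ := mem_image.mp hv
  obtain ⟨v', -, rfl⟩ := mem_image.mp hv'
  obtain ⟨hu₁, hu₂⟩ := mem_Ico.mp (hA hu)
  obtain ⟨hu₁', hu₂'⟩ := mem_Ico.mp (hA hu')
  have hdvd : m ∣ u - u' := ⟨v' - v, by linarith⟩
  have hlt : |u - u'| < m := abs_sub_lt_iff.mpr ⟨by linarith, by linarith⟩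
  obtain rfl : u = u' := sub_eq_zero.mp (eq_zero_of_abs_lt_dvd hdvd hlt)
  obtain rfl : v = v' := mul_left_cancel₀ hm.ne' (by linarith)
  rfl

lemma Ico_add_image_mul_Ico {n : ℤ} (hm : 0 < m) (hn : 0 ≤ n) :
    Ico 0 m + (Ico 0 n).image (m * ·) = Ico 0 (m * n) := by
  have hA : Ico 0 m ⊆ Ico 0 (0 + m) := by rw [zero_add]
  have hB : Ico 0 n ⊆ Ico 0 (0 + n) := by rw [zero_add]
  refine eq_of_subset_of_card_le ?_ (le_of_eq ?_)
  · simpa using add_image_mul_subset_Ico hm.le hA hB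
  · rw [card_add_image_mul hm hA, card_Ico, card_Ico, card_Ico, sub_zero, sub_zero, sub_zero,
      toNat_mul hm.le hn]

end Int

open Int in
lemma exists_sub_eq_Ico_card_add_eq_pow {X Y : Finset ℤ} {b c : ℤ} (hb : 0 < b)
    (hsub : X - Y = Ico 0 b) (hadd : X + Y ⊆ Ico c (c + b)) (k : ℕ) :
    ∃ U V : Finset ℤ, ∃ l : ℤ, U - V = Ico 0 (b ^ k) ∧ #(U + V) = #(X + Y) ^ k ∧
      U + V ⊆ Ico l (l + b ^ k) := by
  induction k with
  | zero => exact ⟨{0}, {0}, 0, by rw [pow_zero]; decide, by simp, by simp⟩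
  | succ k ih =>
    obtain ⟨U, V, l, hUV, hcard, hsubset⟩ := ih
    have hsum : X + U.image (b * ·) + (Y + V.image (b * ·)) = X + Y + (U + V).image (b * ·) := by
      rw [add_add_add_comm, image_mul_left_add]
    refine ⟨X + U.image (b * ·), Y + V.image (b * ·), c + b * l, ?_, ?_, ?_⟩
    · rw [add_sub_add_comm, ← image_mul_left_sub, hsub, hUV,
        Ico_add_image_mul_Ico hb (by positivity), pow_succ']
    · rw [hsum, card_add_image_mul hb hadd, hcard, pow_succ']
    · rw [hsum, pow_succ']
      exact add_image_mul_subset_Ico hb.le hadd hsubset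

lemma Ico_zero_add_singleton_one (n : ℤ) : Ico 0 n + {1} = Icc 1 n := by
  ext x
  simp only [mem_add, mem_Ico, mem_singleton, exists_eq_left, mem_Icc]
  constructor
  · rintro ⟨y, hy, rfl⟩
    omega
  · intro hx
    exact ⟨x - 1, by omega, by ring⟩

theorem stmt14_general (k : ℕ) :
    ∃ U V : Finset ℤ, U - V = Finset.Icc (1 : ℤ) (13 ^ k) ∧ (U + V).card = 10 ^ k := by
  obtain ⟨U, V, -, hUV, hcard, -⟩ :=
    exists_sub_eq_Ico_card_add_eq_pow (X := {1, 2, 5, 7}) (Y := {-5, -4, -1, 1}) (b := 13)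
      (c := -4) (by norm_num) (by decide) (by decide) k
  refine ⟨U + {1}, V, ?_, ?_⟩
  · rw [add_sub_right_comm, hUV, Ico_zero_add_singleton_one]
  · rw [add_right_comm, card_add_singleton, hcard]
    congr 1

/-- For every `k ≥ 1` there exist finite sets `U, V ⊆ ℤ` with
`U − V = {1, …, 13^k}` and `|U + V| = 10^k`. -/
theorem stmt14 (k : ℕ) (hk : 1 ≤ k) :
    ∃ U V : Finset ℤ, U - V = Finset.Icc (1 : ℤ) (13 ^ k) ∧ (U + V).card = 10 ^ k :=
  stmt14_general k
end
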